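/- Let f be a homeomorphism of a compact metric space with the L-shadowing property, let C be a chain recurrent class of f, and suppose f restricted to C is topologically mixing. Then f restricted to C has the two-sided limit shadowing property. -/
import Mathlib


open Filter Metric Set Topology

variable {X : Type*} [MetricSpace X]

/-- `f^k x` for `k : ℤ`, where `f` is a homeomorphism. -/
def iterZ (f : X ≃ₜ X) (k : ℤ) (x : X) : X :=
  if 0 ≤ k then (⇑f)^[k.toNat] x else (⇑f.symm)^[(-k).toNat] x

/-- The classical shadowing property. -/
def Shadowing (f : X ≃ₜ X) : Prop :=
  ∀ ε > (0:ℝ), ∃ δ > (0:ℝ), ∀ x : ℤ → X,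
    (∀ k : ℤ, dist (f (x k)) (x (k+1)) < δ) →
    ∃ z : X, ∀ k : ℤ, dist (iterZ f k z) (x k) < ε

/-- The L-shadowing property. -/
def LShadowing (f : X ≃ₜ X) : Prop :=
  ∀ ε > (0:ℝ), ∃ δ > (0:ℝ), ∀ x : ℤ → X,
    (∀ k : ℤ, dist (f (x k)) (x (k+1)) ≤ δ) →
    Tendsto (fun k : ℤ => dist (f (x k)) (x (k+1))) cofinite (nhds 0) →
    ∃ z : X, (∀ k : ℤ, dist (iterZ f k z) (x k) ≤ ε) ∧
      Tendsto (fun k : ℤ => dist (iterZ f k z) (x k)) cofinite (nhds 0)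

/-- The stable set of `x`. -/
def stableSet (f : X ≃ₜ X) (x : X) : Set X :=
  {y | Tendsto (fun n : ℕ => dist ((⇑f)^[n] x) ((⇑f)^[n] y)) atTop (nhds 0)}

/-- The unstable set of `x`. -/
def unstableSet (f : X ≃ₜ X) (x : X) : Set X := stableSet f.symm x

/-- The local stable set of size `ε` of `x`. -/
def localStable (f : X ≃ₜ X) (ε : ℝ) (x : X) : Set X :=
  {y | ∀ n : ℕ, dist ((⇑f)^[n] x) ((⇑f)^[n] y) ≤ ε}

/-- The local unstable set of size `ε` of `x`. -/
def localUnstable (f : X ≃ₜ X) (ε : ℝ) (x : X) : Set X := localStable f.symm ε x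

/-- `V^s_ε(x) = W^s(x) ∩ W^s_ε(x)`. -/
def Vs (f : X ≃ₜ X) (ε : ℝ) (x : X) : Set X := stableSet f x ∩ localStable f ε x

/-- `V^u_ε(x) = W^u(x) ∩ W^u_ε(x)`. -/
def Vu (f : X ≃ₜ X) (ε : ℝ) (x : X) : Set X := unstableSet f x ∩ localUnstable f ε x

/-- The limit shadowing property. -/
def LimitShadowing (f : X ≃ₜ X) : Prop :=
  ∀ x : ℕ → X, Tendsto (fun k : ℕ => dist (f (x k)) (x (k+1))) atTop (nhds 0) →
    ∃ y : X, Tendsto (fun k : ℕ => dist ((⇑f)^[k] y) (x k)) atTop (nhds 0)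

/-- The two-sided limit shadowing property. -/
def TwoSidedLimitShadowing (f : X ≃ₜ X) : Prop :=
  ∀ x : ℤ → X, Tendsto (fun k : ℤ => dist (f (x k)) (x (k+1))) cofinite (nhds 0) →
    ∃ y : X, Tendsto (fun k : ℤ => dist (iterZ f k y) (x k)) cofinite (nhds 0)

/-- A non-wandering point. -/
def NonWandering (f : X ≃ₜ X) (x : X) : Prop :=
  ∀ U : Set X, IsOpen U → x ∈ U → ∃ k : ℕ, 0 < k ∧ ((⇑f)^[k] '' U ∩ U).Nonempty

/-- The non-wandering set. -/
def omegaSet (f : X ≃ₜ X) : Set X := {x | NonWandering f x}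

/-- Topologically mixing. -/
def TopMixing (f : X ≃ₜ X) : Prop :=
  ∀ U V : Set X, IsOpen U → IsOpen V → U.Nonempty → V.Nonempty →
    ∃ n : ℕ, 0 < n ∧ ∀ k ≥ n, ((⇑f)^[k] '' U ∩ V).Nonempty

/-- `f` is expansive on the set `A` (as a subsystem). -/
def ExpansiveOn (f : X ≃ₜ X) (A : Set X) : Prop :=
  ∃ c > (0:ℝ), ∀ x ∈ A, ∀ y ∈ A,
    (∀ k : ℤ, dist (iterZ f k x) (iterZ f k y) ≤ c) → x = y

/-- The dynamical ball `Γ_δ(x)`. -/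
def dynBall (f : X ≃ₜ X) (δ : ℝ) (x : X) : Set X :=
  {y | ∀ k : ℤ, dist (iterZ f k x) (iterZ f k y) ≤ δ}

/-- There is a periodic `ε`-pseudo-orbit containing both `x` and `y`. -/
def ChainRel (f : X ≃ₜ X) (ε : ℝ) (x y : X) : Prop :=
  ∃ (n : ℕ) (z : ℕ → X), 0 < n ∧ z 0 = x ∧ z n = x ∧ (∃ i ≤ n, z i = y) ∧
    ∀ i < n, dist (f (z i)) (z (i+1)) < ε

/-- The chain recurrent class of `x`. -/
def chainClass (f : X ≃ₜ X) (x : X) : Set X := {y | ∀ ε > (0:ℝ), ChainRel f ε x y}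

/-- `h` is a semiconjugacy from `g` on `K` to the full shift on two symbols. -/
def SemiConjShift (g : X → X) (K : Set X) (h : X → (ℤ → Bool)) : Prop :=
  ContinuousOn h K ∧ (∀ s : ℤ → Bool, ∃ p ∈ K, h p = s) ∧
    ∀ p ∈ K, h (g p) = fun i => h p (i + 1)

/-- `f` admits arbitrarily small topological semi-horseshoes inside `C`. -/
def SmallHorseshoes (f : X ≃ₜ X) (C : Set X) : Prop :=
  ∀ ε > (0:ℝ), ∃ N : ℕ, 1 ≤ N ∧ ∃ K : Set X, K ⊆ C ∧ IsCompact K ∧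
    (⇑f)^[N] '' K = K ∧ (∀ k : ℤ, Metric.diam (iterZ f k '' K) ≤ ε) ∧
    ∃ h : X → (ℤ → Bool), SemiConjShift ((⇑f)^[N]) K h

lemma iterZ_zero (f : X ≃ₜ X) (x : X) : iterZ f 0 x = x := by simp [iterZ]

lemma iterZ_succ (f : X ≃ₜ X) (k : ℤ) (x : X) : iterZ f (k+1) x = f (iterZ f k x) := by
  rcases le_or_gt 0 k with h | h
  · have h1 : (0:ℤ) ≤ k + 1 := by omega
    simp only [iterZ, if_pos h, if_pos h1]
    have : (k+1).toNat = k.toNat + 1 := by omega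
    rw [this, Function.iterate_succ_apply']
  · have h1 : ¬ (0:ℤ) ≤ k := not_le.mpr h
    simp only [iterZ, if_neg h1]
    rcases le_or_gt 0 (k+1) with h2 | h2
    · have hk : k = -1 := by omega
      subst hk
      norm_num
    · rw [if_neg (not_le.mpr h2)]
      have : (-k).toNat = (-(k+1)).toNat + 1 := by omega
      rw [this, Function.iterate_succ_apply', Homeomorph.apply_symm_apply]

lemma iterZ_natCast (f : X ≃ₜ X) (n : ℕ) (x : X) : iterZ f n x = (⇑f)^[n] x := by
  simp [iterZ]


/-- a topologically mixing chain recurrent class of a homeomorphism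
with L-shadowing has the two-sided limit shadowing property. -/
theorem twoSided_on_mixing_chainClass [CompactSpace X] (f : X ≃ₜ X)
    (hL : LShadowing f) (C : Set X) (hC : ∃ x : X, C = chainClass f x)
    (hmix : ∀ U V : Set X, IsOpen U → IsOpen V →
      (U ∩ C).Nonempty → (V ∩ C).Nonempty →
      ∃ n : ℕ, 0 < n ∧ ∀ k ≥ n, ((⇑f)^[k] '' (U ∩ C) ∩ (V ∩ C)).Nonempty) :
    ∀ x : ℤ → X, (∀ k, x k ∈ C) →
      Tendsto (fun k : ℤ => dist (f (x k)) (x (k+1))) cofinite (nhds 0) →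
      ∃ y ∈ C, Tendsto (fun k : ℤ => dist (iterZ f k y) (x k)) cofinite (nhds 0) := by
  classical
  obtain ⟨x₀, rfl⟩ := hC
  intro x hxC hx
  -- uniform continuity of f
  have hucf : UniformContinuous (⇑f) :=
    CompactSpace.uniformContinuous_of_continuous f.continuous
  -- δ from L-shadowing with ε = 1
  obtain ⟨δ, hδ, hLs⟩ := hL 1 one_pos
  -- η : modulus for δ
  obtain ⟨η₁, hη₁, hηc⟩ := Metric.uniformContinuous_iff.mp hucf δ hδ
  set η : ℝ := min η₁ δ with hηdef
  have hη : 0 < η := lt_min hη₁ hδ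
  have hηδ : η ≤ δ := min_le_right _ _
  have hηcont : ∀ a b : X, dist a b < η → dist (f a) (f b) < δ := by
    intro a b hab
    exact hηc (lt_of_lt_of_le hab (min_le_left _ _))
  -- uniform mixing constant
  have hUnif : ∃ n₀ : ℕ, ∀ a ∈ chainClass f x₀, ∀ b ∈ chainClass f x₀, ∀ k, n₀ ≤ k →
      ∃ p ∈ chainClass f x₀, dist p a < η ∧ dist ((⇑f)^[k] p) b < η := by
    obtain ⟨t, -, htfin, hcov⟩ := finite_cover_balls_of_compact (isCompact_univ : IsCompact (Set.univ : Set X)) (half_pos hη)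
    set g : X → X → ℕ := fun c d =>
      if h : (ball c (η/2) ∩ chainClass f x₀).Nonempty ∧
          (ball d (η/2) ∩ chainClass f x₀).Nonempty
      then (hmix _ _ isOpen_ball isOpen_ball h.1 h.2).choose else 0 with hgdef
    refine ⟨htfin.toFinset.sup (fun c => htfin.toFinset.sup (fun d => g c d)), ?_⟩
    intro a ha b hb k hk
    obtain ⟨c, hc, hac⟩ : ∃ c ∈ t, a ∈ ball c (η/2) := by
      simpa using hcov (Set.mem_univ a)
    obtain ⟨d, hd, hbd⟩ : ∃ d ∈ t, b ∈ ball d (η/2) := by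
      simpa using hcov (Set.mem_univ b)
    have hU : (ball c (η/2) ∩ chainClass f x₀).Nonempty := ⟨a, hac, ha⟩
    have hV : (ball d (η/2) ∩ chainClass f x₀).Nonempty := ⟨b, hbd, hb⟩
    have hge : g c d = (hmix _ _ isOpen_ball isOpen_ball hU hV).choose := by
      rw [hgdef]
      exact dif_pos ⟨hU, hV⟩
    have hgle : g c d ≤ htfin.toFinset.sup (fun c => htfin.toFinset.sup (fun d => g c d)) := by
      refine le_trans ?_ (Finset.le_sup (htfin.mem_toFinset.mpr hc))
      exact Finset.le_sup (f := fun d => g c d) (htfin.mem_toFinset.mpr hd)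
    obtain ⟨-, hspec⟩ := (hmix _ _ isOpen_ball isOpen_ball hU hV).choose_spec
    obtain ⟨wpt, hw1, hw2, hw3⟩ := hspec k (by rw [← hge]; omega)
    obtain ⟨q, ⟨hq1, hq2⟩, rfl⟩ := hw1
    refine ⟨q, hq2, ?_, ?_⟩
    · calc dist q a ≤ dist q c + dist a c := dist_triangle_right _ _ _
        _ < η/2 + η/2 := add_lt_add (mem_ball.mp hq1) (mem_ball.mp hac)
        _ = η := by ring
    · calc dist ((⇑f)^[k] q) b ≤ dist ((⇑f)^[k] q) d + dist b d := dist_triangle_right _ _ _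
        _ < η/2 + η/2 := add_lt_add (mem_ball.mp hw2) (mem_ball.mp hbd)
        _ = η := by ring
  obtain ⟨n₀, hn₀⟩ := hUnif
  -- tail bound: gaps < δ outside a finite window
  have hFin : {k : ℤ | ¬ dist (f (x k)) (x (k+1)) < δ}.Finite := by
    have := (Metric.tendsto_nhds.mp hx) δ hδ
    rw [Filter.eventually_cofinite] at this
    apply this.subset
    intro k hk
    simp only [Set.mem_setOf_eq] at hk ⊢
    intro h
    apply hk
    rwa [Real.dist_eq, sub_zero, abs_of_nonneg dist_nonneg] at h
  obtain ⟨B, hB⟩ := (hFin.image Int.natAbs).bddAbove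
  set N : ℕ := B + n₀ + 1 with hNdef
  have hNgap : ∀ k : ℤ, N ≤ k.natAbs → dist (f (x k)) (x (k+1)) < δ := by
    intro k hk
    by_contra h
    have : k.natAbs ∈ Int.natAbs '' {k : ℤ | ¬ dist (f (x k)) (x (k+1)) < δ} :=
      ⟨k, h, rfl⟩
    have := hB this
    omega
  -- connecting point from mixing
  obtain ⟨p, hpC, hp₁, hp₂⟩ :=
    hn₀ (x (-(N:ℤ))) (hxC _) (x (N:ℤ)) (hxC _) (2*N) (by omega)
  -- the spliced pseudo-orbit
  set x' : ℤ → X := fun k =>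
    if k ≤ -(N:ℤ) then x k else if k < (N:ℤ) then (⇑f)^[(k + N).toNat] p else x k
    with hx'def
  have hx'tail : ∀ k : ℤ, (N:ℤ) ≤ |k| → x' k = x k := by
    intro k hk
    simp only [hx'def]
    rcases abs_cases k with ⟨h1, h2⟩ | ⟨h1, h2⟩
    · rw [if_neg (by omega), if_neg (by omega)]
    · rw [if_pos (by omega)]
  have hx'gap : ∀ k : ℤ, dist (f (x' k)) (x' (k+1)) ≤ δ := by
    intro k
    simp only [hx'def]
    rcases lt_trichotomy k (-(N:ℤ)) with hk | hk | hk
    · rw [if_pos (by omega : k ≤ -(N:ℤ)), if_pos (by omega : k + 1 ≤ -(N:ℤ))]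
      exact (hNgap k (by omega)).le
    · subst hk
      rw [if_pos le_rfl, if_neg (by omega), if_pos (by omega)]
      have h1 : (-(N:ℤ) + 1 + N).toNat = 1 := by omega
      rw [h1, Function.iterate_one]
      exact (hηcont _ _ (by rw [dist_comm]; exact hp₁)).le
    · rcases lt_trichotomy (k+1) (N:ℤ) with hk2 | hk2 | hk2
      · rw [if_neg (by omega), if_pos (by omega), if_neg (by omega), if_pos hk2]
        have h1 : (k + 1 + N).toNat = (k + N).toNat + 1 := by omega
        rw [h1, Function.iterate_succ_apply', dist_self]
        exact hδ.le
      · rw [if_neg (by omega), if_pos (by omega), if_neg (by omega), if_neg (by omega)]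
        have key : f ((⇑f)^[(k + ↑N).toNat] p) = (⇑f)^[2*N] p := by
          rw [← Function.iterate_succ_apply' (⇑f) (k + ↑N).toNat p]
          congr 1
          omega
        rw [key, hk2]
        exact (lt_of_lt_of_le hp₂ hηδ).le
      · rw [if_neg (by omega), if_neg (by omega), if_neg (by omega), if_neg (by omega)]
        exact (hNgap k (by omega)).le
  have hx'tend : Tendsto (fun k : ℤ => dist (f (x' k)) (x' (k+1))) cofinite (nhds 0) := by
    apply Filter.Tendsto.congr' _ hx
    rw [Filter.eventuallyEq_iff_exists_mem]
    refine ⟨{k : ℤ | (N:ℤ) + 1 ≤ |k|}, ?_, ?_⟩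
    · rw [Filter.mem_cofinite]
      apply Set.Finite.subset (Set.finite_Icc (-(N:ℤ)-1) ((N:ℤ)+1))
      intro k hk
      simp only [Set.mem_compl_iff, Set.mem_setOf_eq, not_le] at hk
      simp only [Set.mem_Icc]
      rcases abs_cases k with ⟨h1,h2⟩|⟨h1,h2⟩ <;> omega
    · intro k hk
      simp only [Set.mem_setOf_eq] at hk
      show dist (f (x k)) (x (k+1)) = dist (f (x' k)) (x' (k+1))
      have h1 : (N:ℤ) ≤ |k| := by
        rcases abs_cases k with ⟨g1,g2⟩|⟨g1,g2⟩ <;> omega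
      have h2 : (N:ℤ) ≤ |k+1| := by
        rcases abs_cases k with ⟨g1,g2⟩|⟨g1,g2⟩ <;>
          rcases abs_cases (k+1) with ⟨g3,g4⟩|⟨g3,g4⟩ <;> omega
      rw [hx'tail k h1, hx'tail (k+1) h2]
  obtain ⟨z, hz₁, hz₂⟩ := hLs x' hx'gap hx'tend
  have hztend : Tendsto (fun k : ℤ => dist (iterZ f k z) (x k)) cofinite (nhds 0) := by
    apply Filter.Tendsto.congr' _ hz₂
    rw [Filter.eventuallyEq_iff_exists_mem]
    refine ⟨{k : ℤ | (N:ℤ) ≤ |k|}, ?_, ?_⟩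
    · rw [Filter.mem_cofinite]
      apply Set.Finite.subset (Set.finite_Icc (-(N:ℤ)) N)
      intro k hk
      simp only [Set.mem_compl_iff, Set.mem_setOf_eq, not_le] at hk
      simp only [Set.mem_Icc]
      rcases abs_cases k with ⟨h1,h2⟩|⟨h1,h2⟩ <;> omega
    · intro k hk
      simp only [Set.mem_setOf_eq] at hk
      show dist (iterZ f k z) (x' k) = dist (iterZ f k z) (x k)
      rw [hx'tail k hk]
  refine ⟨z, ?_, hztend⟩
  -- z belongs to the chain class
  intro ε hε
  obtain ⟨η₂, hη₂, hη₂c⟩ := Metric.uniformContinuous_iff.mp hucf (ε/2) (half_pos hε)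
  have hzbot : Tendsto (fun k : ℤ => dist (iterZ f k z) (x k)) atBot (nhds 0) :=
    hztend.mono_left (by rw [Int.cofinite_eq]; exact le_sup_left)
  have hztop : Tendsto (fun k : ℤ => dist (iterZ f k z) (x k)) atTop (nhds 0) :=
    hztend.mono_left (by rw [Int.cofinite_eq]; exact le_sup_right)
  have hxtop : Tendsto (fun k : ℤ => dist (f (x k)) (x (k+1))) atTop (nhds 0) :=
    hx.mono_left (by rw [Int.cofinite_eq]; exact le_sup_right)
  have hbot := Metric.tendsto_nhds.mp hzbot η₂ hη₂
  rw [Filter.eventually_atBot] at hbot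
  obtain ⟨b, hb⟩ := hbot
  set m : ℤ := min b (-1) with hmdef
  have hm : dist (iterZ f m z) (x m) < η₂ := by
    have := hb m (min_le_left _ _)
    rwa [Real.dist_eq, sub_zero, abs_of_nonneg dist_nonneg] at this
  have hmneg : m ≤ -1 := min_le_right _ _
  have htop := ((Metric.tendsto_nhds.mp hztop η₂ hη₂).and
    (Metric.tendsto_nhds.mp hxtop (ε/2) (half_pos hε)))
  rw [Filter.eventually_atTop] at htop
  obtain ⟨c, hcc⟩ := htop
  set M : ℤ := max c 1 with hMdef
  have hMpos : 1 ≤ M := le_max_right _ _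
  have hM1 : dist (iterZ f M z) (x M) < η₂ := by
    have := (hcc M (le_max_left _ _)).1
    rwa [Real.dist_eq, sub_zero, abs_of_nonneg dist_nonneg] at this
  have hM2 : dist (f (x M)) (x (M+1)) < ε/2 := by
    have := (hcc M (le_max_left _ _)).2
    rwa [Real.dist_eq, sub_zero, abs_of_nonneg dist_nonneg] at this
  obtain ⟨n₁, w, hn₁pos, hw0, hwn, ⟨i, hi, hwi⟩, hwgap⟩ := hxC m ε hε
  obtain ⟨n₂, w', hn₂pos, hw'0, hw'n, ⟨j, hj, hw'j⟩, hw'gap⟩ := hxC (M+1) ε hε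
  set L : ℕ := (M - m).toNat with hLdef
  have hL : (L:ℤ) = M - m := by omega
  set Z : ℕ → X := fun u =>
    if u ≤ i then w u
    else if u ≤ i + L then iterZ f (m + ((u - i : ℕ) : ℤ)) z
    else w' (j + (u - (i + L + 1))) with hZdef
  refine ⟨i + L + 1 + (n₂ - j), Z, by omega, ?_, ?_, ⟨i + (-m).toNat, by omega, ?_⟩, ?_⟩
  · simp only [hZdef]
    rw [if_pos (Nat.zero_le i), hw0]
  · simp only [hZdef]
    rw [if_neg (by omega), if_neg (by omega)]
    have h1 : j + (i + L + 1 + (n₂ - j) - (i + L + 1)) = n₂ := by omega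
    rw [h1, hw'n]
  · simp only [hZdef]
    rw [if_neg (by omega), if_pos (by omega)]
    have h1 : m + ((i + (-m).toNat - i : ℕ) : ℤ) = 0 := by omega
    rw [h1, iterZ_zero]
  · intro u hu
    simp only [hZdef]
    rcases lt_trichotomy u i with h | h | h
    · rw [if_pos h.le, if_pos (by omega)]
      exact hwgap u (by omega)
    · subst h
      rw [if_pos le_rfl, if_neg (by omega), if_pos (by omega), hwi]
      have h4 : m + ((u + 1 - u : ℕ) : ℤ) = m + 1 := by omega
      rw [h4, iterZ_succ]
      calc dist (f (x m)) (f (iterZ f m z)) < ε/2 := hη₂c (by rw [dist_comm]; exact hm)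
        _ < ε := by linarith
    · rcases lt_trichotomy u (i + L) with h2 | h2 | h2
      · rw [if_neg (by omega), if_pos (by omega), if_neg (by omega), if_pos (by omega)]
        have h5 : m + ((u + 1 - i : ℕ) : ℤ) = m + ((u - i : ℕ) : ℤ) + 1 := by omega
        rw [h5, iterZ_succ, dist_self]
        exact hε
      · subst h2
        rw [if_neg (by omega), if_pos le_rfl, if_neg (by omega), if_neg (by omega)]
        have h6 : m + ((i + L - i : ℕ) : ℤ) = M := by omega
        have h7 : j + (i + L + 1 - (i + L + 1)) = j := by omega
        rw [h6, h7, hw'j]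
        calc dist (f (iterZ f M z)) (x (M+1))
            ≤ dist (f (iterZ f M z)) (f (x M)) + dist (f (x M)) (x (M+1)) :=
              dist_triangle _ _ _
          _ < ε/2 + ε/2 := add_lt_add (hη₂c hM1) hM2
          _ = ε := by linarith
      · rw [if_neg (by omega), if_neg (by omega), if_neg (by omega), if_neg (by omega)]
        have h8 : j + (u + 1 - (i + L + 1)) = j + (u - (i + L + 1)) + 1 := by omega
        rw [h8]
        exact hw'gap _ (by omega)
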